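/- arXiv:math/0612058 — 4 statements merged into one kernel-verified Lean document; each statement's English description precedes it below -/
import Mathlib

section
/- For 0 < q < 1 and x ≥ 0, the derivative B'_q(x) satisfies B'_q(x) ≤ (q/(1-q)) B_q(x), where B_q(x) = ∑_{k=0}^∞ q^{k²} x^k/(q;q)_k. -/
/-- `B_q(x) = ∑ q^{k²} x^k/(q;q)_k`. -/
noncomputable def Bq (q x : ℝ) : ℝ :=
  ∑' k : ℕ, q ^ (k ^ 2) * x ^ k / ∏ j ∈ Finset.range k, (1 - q ^ (j + 1))

set_option maxHeartbeats 1000000 in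
theorem deriv_Bq_le (q x : ℝ) (hq0 : 0 < q) (hq1 : q < 1) (hx : 0 ≤ x) :
    deriv (Bq q) x ≤ q / (1 - q) * Bq q x := by
  have hq1' : 0 < 1 - q := by linarith
  set c : ℕ → ℝ := fun k => ∏ j ∈ Finset.range k, (1 - q ^ (j + 1)) with hc
  have hcpos : ∀ k, 0 < c k := by
    intro k
    refine Finset.prod_pos fun j _ => ?_
    have : q ^ (j + 1) < 1 := pow_lt_one₀ hq0.le hq1 (Nat.succ_ne_zero j)
    linarith
  have hclb : ∀ k, (1 - q) ^ k ≤ c k := by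
    intro k
    rw [hc]
    calc (1 - q) ^ k = ∏ j ∈ Finset.range k, (1 - q) := by
          rw [Finset.prod_const, Finset.card_range]
      _ ≤ ∏ j ∈ Finset.range k, (1 - q ^ (j + 1)) := by
          refine Finset.prod_le_prod (fun j _ => hq1'.le) fun j _ => ?_
          have : q ^ (j + 1) ≤ q ^ 1 := pow_le_pow_of_le_one hq0.le hq1.le (by omega)
          simpa using by linarith [this]
  set g : ℕ → ℝ → ℝ := fun k y => q ^ (k ^ 2) * y ^ k / c k with hg
  set g' : ℕ → ℝ → ℝ := fun k y => q ^ (k ^ 2) / c k * (k * y ^ (k - 1)) with hg'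
  have hBq : ∀ y, Bq q y = ∑' k, g k y := fun y => rfl
  have hderiv : ∀ k y, HasDerivAt (g k) (g' k y) y := by
    intro k y
    have h := (hasDerivAt_pow k y).const_mul (q ^ (k ^ 2) / c k)
    have hgk : g k = fun z => q ^ (k ^ 2) / c k * z ^ k := by
      funext z
      simp only [hg]
      ring
    rw [hgk]
    exact h
  -- set-up for uniform bounds on an interval
  set R : ℝ := x + 1 with hR
  have hR1 : 1 ≤ R := by linarith
  have hR0 : 0 < R := by linarith
  set M : ℝ := R / (1 - q) with hM
  have hM0 : 0 < M := div_pos hR0 hq1'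
  set u : ℕ → ℝ := fun k => q ^ (k ^ 2) / c k * (k * R ^ (k - 1)) with hu
  -- coefficient bound : q^(k²)/c k * R^k ≤ (M * q^k)^k
  have hcoefb : ∀ k, q ^ (k ^ 2) / c k * R ^ k ≤ (M * q ^ k) ^ k := by
    intro k
    have h1 : q ^ (k ^ 2) / c k ≤ q ^ (k ^ 2) / (1 - q) ^ k :=
      div_le_div_of_nonneg_left (by positivity) (pow_pos hq1' k) (hclb k)
    have h2 : (M * q ^ k) ^ k = q ^ (k ^ 2) / (1 - q) ^ k * R ^ k := by
      rw [mul_pow, hM, div_pow, ← pow_mul, ← pow_two]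
      ring
    rw [h2]
    exact mul_le_mul_of_nonneg_right h1 (by positivity)
  -- eventual geometric bound
  have hev : ∀ᶠ k in Filter.atTop, M * q ^ k ≤ 1 / 2 := by
    have h := tendsto_pow_atTop_nhds_zero_of_lt_one hq0.le hq1
    have h2 : Filter.Tendsto (fun k => M * q ^ k) Filter.atTop (nhds (M * 0)) :=
      h.const_mul M
    rw [mul_zero] at h2
    exact h2.eventually_le_const (by norm_num)
  have hu_sum : Summable u := by
    have hs : Summable (fun k : ℕ => (k : ℝ) ^ 1 * (1 / 2 : ℝ) ^ k) :=
      summable_pow_mul_geometric_of_norm_lt_one 1 (by rw [Real.norm_eq_abs, abs_of_nonneg] <;> norm_num)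
    refine hs.of_norm_bounded_eventually_nat ?_
    filter_upwards [hev] with k hk
    have hk0 : (0:ℝ) ≤ M * q ^ k := by positivity
    have h3 : (M * q ^ k) ^ k ≤ (1 / 2 : ℝ) ^ k := pow_le_pow_left₀ hk0 hk k
    have h4 : u k ≤ (k : ℝ) * (1 / 2) ^ k := by
      have h5 : R ^ (k - 1) ≤ R ^ k :=
        pow_le_pow_right₀ hR1 (Nat.sub_le k 1)
      have hdn : 0 ≤ q ^ (k ^ 2) / c k := div_nonneg (by positivity) (hcpos k).le
      calc u k = (k : ℝ) * (q ^ (k ^ 2) / c k * R ^ (k - 1)) := by rw [hu]; ring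
        _ ≤ (k : ℝ) * (q ^ (k ^ 2) / c k * R ^ k) := by
            exact mul_le_mul_of_nonneg_left (mul_le_mul_of_nonneg_left h5 hdn) (by positivity)
        _ ≤ (k : ℝ) * (M * q ^ k) ^ k := by
            exact mul_le_mul_of_nonneg_left (hcoefb k) (by positivity)
        _ ≤ (k : ℝ) * (1 / 2) ^ k :=
            mul_le_mul_of_nonneg_left h3 (by positivity)
    have hupos : 0 ≤ u k := by
      rw [hu]
      exact mul_nonneg (div_nonneg (by positivity) (hcpos k).le) (by positivity)
    rw [Real.norm_eq_abs, abs_of_nonneg hupos]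
    simpa using h4
  -- summability of g at x
  have hgx_sum : Summable (fun k => g k x) := by
    have hs : Summable (fun k : ℕ => (1 / 2 : ℝ) ^ k) :=
      summable_geometric_of_lt_one (by norm_num) (by norm_num)
    refine hs.of_norm_bounded_eventually_nat ?_
    filter_upwards [hev] with k hk
    have hxR : x ≤ R := by linarith
    have h3 : (M * q ^ k) ^ k ≤ (1 / 2 : ℝ) ^ k := pow_le_pow_left₀ (by positivity) hk k
    have h4 : g k x ≤ (1 / 2) ^ k := by
      calc g k x = q ^ (k ^ 2) / c k * x ^ k := by rw [hg]; ring
        _ ≤ q ^ (k ^ 2) / c k * R ^ k :=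
            mul_le_mul_of_nonneg_left (pow_le_pow_left₀ hx hxR k)
              (div_nonneg (by positivity) (hcpos k).le)
        _ ≤ (M * q ^ k) ^ k := hcoefb k
        _ ≤ (1 / 2) ^ k := h3
    have hgpos : 0 ≤ g k x := by
      rw [hg]
      exact div_nonneg (by positivity) (hcpos k).le
    rw [Real.norm_eq_abs, abs_of_nonneg hgpos]
    exact h4
  -- the bound on derivatives on the interval
  have hbound : ∀ k y, y ∈ Set.Ioo (-R) R → ‖g' k y‖ ≤ u k := by
    intro k y hy
    rw [hg', hu, Real.norm_eq_abs, abs_mul, abs_mul]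
    have h1 : |q ^ (k ^ 2) / c k| = q ^ (k ^ 2) / c k :=
      abs_of_nonneg (div_nonneg (by positivity) (hcpos k).le)
    have h2 : |(k : ℝ)| = (k : ℝ) := abs_of_nonneg (by positivity)
    rw [h1, h2]
    refine mul_le_mul_of_nonneg_left (mul_le_mul_of_nonneg_left ?_ (by positivity))
      (div_nonneg (by positivity) (hcpos k).le)
    rw [abs_pow]
    refine pow_le_pow_left₀ (abs_nonneg y) ?_ _
    rw [abs_le]
    exact ⟨hy.1.le, hy.2.le⟩
  have hxmem : x ∈ Set.Ioo (-R) R := ⟨by linarith, by linarith⟩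
  -- the derivative
  have hD : HasDerivAt (Bq q) (∑' k, g' k x) x := by
    have h := hasDerivAt_tsum_of_isPreconnected hu_sum isOpen_Ioo isPreconnected_Ioo
      (fun k y _ => hderiv k y) hbound hxmem hgx_sum hxmem
    have : (fun z => ∑' k, g k z) = Bq q := by
      funext z; exact (hBq z).symm
    rwa [this] at h
  have hg'x_sum : Summable (fun k => g' k x) :=
    Summable.of_norm_bounded hu_sum fun k => hbound k x hxmem
  rw [hD.deriv]
  -- shift index: first term of derivative series is 0
  have h0 : g' 0 x = 0 := by simp [hg']
  rw [Summable.tsum_eq_zero_add hg'x_sum, h0, zero_add]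
  -- termwise comparison
  have hterm : ∀ k : ℕ, g' (k + 1) x ≤ q / (1 - q) * g k x := by
    intro k
    have hs : 0 < 1 - q ^ (k + 1) := by
      have : q ^ (k + 1) < 1 := pow_lt_one₀ hq0.le hq1 (Nat.succ_ne_zero k)
      linarith
    -- key inequality
    have hgeom : (1 - q) * (((k : ℝ) + 1) * q ^ k) ≤ 1 - q ^ (k + 1) := by
      have hsum : ((k : ℝ) + 1) * q ^ k ≤ ∑ i ∈ Finset.range (k + 1), q ^ i := by
        have := Finset.card_nsmul_le_sum (Finset.range (k + 1)) (fun i => q ^ i) (q ^ k)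
          (fun i hi => pow_le_pow_of_le_one hq0.le hq1.le
            (Nat.le_of_lt_succ (Finset.mem_range.mp hi)))
        simpa [Finset.card_range, nsmul_eq_mul, add_comm] using this
      have hgs : (1 - q) * ∑ i ∈ Finset.range (k + 1), q ^ i = 1 - q ^ (k + 1) := by
        have h := geom_sum_mul q (k + 1)
        linear_combination -h
      calc (1 - q) * (((k : ℝ) + 1) * q ^ k)
          ≤ (1 - q) * ∑ i ∈ Finset.range (k + 1), q ^ i :=
            mul_le_mul_of_nonneg_left hsum hq1'.le
        _ = 1 - q ^ (k + 1) := hgs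
    have hpe : q ^ (2 * k + 1) ≤ q ^ (k + 1) :=
      pow_le_pow_of_le_one hq0.le hq1.le (by omega)
    have key : ((k : ℝ) + 1) * q ^ ((k + 1) ^ 2) * (1 - q) ≤
        q * q ^ (k ^ 2) * (1 - q ^ (k + 1)) := by
      have hsq : (k + 1) ^ 2 = k ^ 2 + (2 * k + 1) := by ring
      rw [hsq, pow_add]
      have h6 : q * (1 - q) * (((k : ℝ) + 1) * q ^ k) ≤ q * (1 - q ^ (k + 1)) := by
        have h6' := mul_le_mul_of_nonneg_left hgeom hq0.le
        calc q * (1 - q) * (((k : ℝ) + 1) * q ^ k)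
            = q * ((1 - q) * (((k : ℝ) + 1) * q ^ k)) := by ring
          _ ≤ q * (1 - q ^ (k + 1)) := h6'
      have h7 : q ^ (k + 1) = q * q ^ k := by rw [pow_succ]; ring
      calc ((k : ℝ) + 1) * (q ^ (k ^ 2) * q ^ (2 * k + 1)) * (1 - q)
          ≤ ((k : ℝ) + 1) * (q ^ (k ^ 2) * q ^ (k + 1)) * (1 - q) := by
            have hnn : (0:ℝ) ≤ ((k : ℝ) + 1) * q ^ (k ^ 2) * (1 - q) :=
              mul_nonneg (mul_nonneg (by positivity) (by positivity)) hq1'.le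
            have h8 := mul_le_mul_of_nonneg_left hpe hnn
            nlinarith [h8]
        _ = q ^ (k ^ 2) * (q * (1 - q) * (((k : ℝ) + 1) * q ^ k)) := by
            rw [h7]; ring
        _ ≤ q ^ (k ^ 2) * (q * (1 - q ^ (k + 1))) :=
            mul_le_mul_of_nonneg_left h6 (by positivity)
        _ = q * q ^ (k ^ 2) * (1 - q ^ (k + 1)) := by ring
    -- coefficient inequality
    have hcsucc : c (k + 1) = c k * (1 - q ^ (k + 1)) := by
      simp only [hc]
      exact Finset.prod_range_succ _ _
    have hcoef : ((k : ℝ) + 1) * q ^ ((k + 1) ^ 2) / c (k + 1) ≤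
        q * q ^ (k ^ 2) / ((1 - q) * c k) := by
      rw [hcsucc, div_le_div_iff₀ (mul_pos (hcpos k) hs) (mul_pos hq1' (hcpos k))]
      calc ((k : ℝ) + 1) * q ^ ((k + 1) ^ 2) * ((1 - q) * c k)
          = (((k : ℝ) + 1) * q ^ ((k + 1) ^ 2) * (1 - q)) * c k := by ring
        _ ≤ (q * q ^ (k ^ 2) * (1 - q ^ (k + 1))) * c k :=
            mul_le_mul_of_nonneg_right key (hcpos k).le
        _ = q * q ^ (k ^ 2) * (c k * (1 - q ^ (k + 1))) := by ring
    have hL : g' (k + 1) x = ((k : ℝ) + 1) * q ^ ((k + 1) ^ 2) / c (k + 1) * x ^ k := by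
      rw [hg']
      push_cast
      ring
    have hRr : q / (1 - q) * g k x = q * q ^ (k ^ 2) / ((1 - q) * c k) * x ^ k := by
      rw [hg]
      field_simp
    rw [hL, hRr]
    exact mul_le_mul_of_nonneg_right hcoef (pow_nonneg hx k)
  have hshift_sum : Summable (fun k => g' (k + 1) x) :=
    (summable_nat_add_iff 1).mpr hg'x_sum
  have hrhs_sum : Summable (fun k => q / (1 - q) * g k x) := hgx_sum.mul_left _
  calc ∑' k, g' (k + 1) x ≤ ∑' k, q / (1 - q) * g k x :=
        Summable.tsum_le_tsum hterm hshift_sum hrhs_sum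
    _ = q / (1 - q) * Bq q x := by rw [tsum_mul_left, hBq]
end

section
/- Let 0 < q < 1, a > 0 with a q < 1, and n ∈ ℕ with n ≥ 1. Define R₂(a;n) := 1/(a q^n; q)_∞ − 1, where (x;q)_∞ = ∏_{k=0}^∞ (1 − x q^k). Then |R₂(a;n)| ≤ a q^n / ((1 − q) · (a q; q)_∞). -/
open Real Finset
set_option maxHeartbeats 1000000

lemma summable_log_aux {q c : ℝ} (hq0 : 0 < q) (hq1 : q < 1) (hc0 : 0 ≤ c) (hc1 : c < 1) :
    Summable (fun k : ℕ => Real.log (1 - c * q ^ k)) := by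
  have hfac : ∀ k : ℕ, 0 < 1 - c * q ^ k := by
    intro k
    have h1 : c * q ^ k ≤ c * 1 := by
      apply mul_le_mul_of_nonneg_left _ hc0
      exact pow_le_one₀ hq0.le hq1.le
    nlinarith
  rw [← summable_neg_iff]
  refine Summable.of_nonneg_of_le (f := fun k => (c / (1 - c)) * q ^ k) ?_ ?_
    ((summable_geometric_of_lt_one hq0.le hq1).mul_left _)
  · intro k
    simp only [neg_nonneg]
    apply Real.log_nonpos (hfac k).le
    nlinarith [pow_nonneg hq0.le k, mul_nonneg hc0 (pow_nonneg hq0.le k)]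
  · intro k
    have h1 : -Real.log (1 - c * q ^ k) = Real.log (1 - c * q ^ k)⁻¹ := by
      rw [Real.log_inv]
    rw [h1]
    have h2 : Real.log (1 - c * q ^ k)⁻¹ ≤ (1 - c * q ^ k)⁻¹ - 1 :=
      Real.log_le_sub_one_of_pos (inv_pos.2 (hfac k))
    have h3 : (1 - c * q ^ k)⁻¹ - 1 = (c * q ^ k) / (1 - c * q ^ k) := by
      have hne := (hfac k).ne'
      field_simp
      ring
    have h4 : c * q ^ k ≤ c := by
      calc c * q ^ k ≤ c * 1 := mul_le_mul_of_nonneg_left (pow_le_one₀ hq0.le hq1.le) hc0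
      _ = c := mul_one c
    have h5 : (c * q ^ k) / (1 - c * q ^ k) ≤ (c * q ^ k) / (1 - c) := by
      apply div_le_div_of_nonneg_left (mul_nonneg hc0 (pow_nonneg hq0.le k)) (by linarith)
      nlinarith
    calc Real.log (1 - c * q ^ k)⁻¹ ≤ (c * q ^ k) / (1 - c * q ^ k) := by rw [← h3]; exact h2
      _ ≤ (c * q ^ k) / (1 - c) := h5
      _ = (c / (1 - c)) * q ^ k := by ring

lemma multipliable_aux {q c : ℝ} (hq0 : 0 < q) (hq1 : q < 1) (hc0 : 0 ≤ c) (hc1 : c < 1) :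
    Multipliable (fun k : ℕ => 1 - c * q ^ k) := by
  have hfac : ∀ k : ℕ, 0 < 1 - c * q ^ k := by
    intro k
    have h1 : c * q ^ k ≤ c * 1 := mul_le_mul_of_nonneg_left (pow_le_one₀ hq0.le hq1.le) hc0
    nlinarith
  exact Real.multipliable_of_summable_log
    (fun k => hfac k) (summable_log_aux hq0 hq1 hc0 hc1)

lemma tprod_pos_aux {q c : ℝ} (hq0 : 0 < q) (hq1 : q < 1) (hc0 : 0 ≤ c) (hc1 : c < 1) :
    0 < ∏' k : ℕ, (1 - c * q ^ k) := by
  have hfac : ∀ k : ℕ, 0 < 1 - c * q ^ k := by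
    intro k
    have h1 : c * q ^ k ≤ c * 1 := mul_le_mul_of_nonneg_left (pow_le_one₀ hq0.le hq1.le) hc0
    nlinarith
  have := (Real.rexp_tsum_eq_tprod (f := fun k => 1 - c * q ^ k)
    (fun k => hfac k) (summable_log_aux hq0 hq1 hc0 hc1))
  rw [← this]
  exact Real.exp_pos _

lemma tprod_le_one_aux {q c : ℝ} (hq0 : 0 < q) (hq1 : q < 1) (hc0 : 0 ≤ c) (hc1 : c < 1) :
    ∏' k : ℕ, (1 - c * q ^ k) ≤ 1 := by
  have hfac : ∀ k : ℕ, 0 < 1 - c * q ^ k := by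
    intro k
    have h1 : c * q ^ k ≤ c * 1 := mul_le_mul_of_nonneg_left (pow_le_one₀ hq0.le hq1.le) hc0
    nlinarith
  have heq := (Real.rexp_tsum_eq_tprod (f := fun k => 1 - c * q ^ k)
    (fun k => hfac k) (summable_log_aux hq0 hq1 hc0 hc1))
  rw [← heq]
  rw [Real.exp_le_one_iff]
  apply tsum_nonpos
  intro k
  apply Real.log_nonpos (hfac k).le
  nlinarith [pow_nonneg hq0.le k, mul_nonneg hc0 (pow_nonneg hq0.le k)]

lemma one_sub_tprod_aux {q c : ℝ} (hq0 : 0 < q) (hq1 : q < 1) (hc0 : 0 ≤ c) (hc1 : c < 1) :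
    1 - ∏' k : ℕ, (1 - c * q ^ k) ≤ c / (1 - q) := by
  have hfin : ∀ s : Finset ℕ, 1 - ∑ i ∈ s, c * q ^ i ≤ ∏ i ∈ s, (1 - c * q ^ i) := by
    intro s
    rw [Finset.prod_one_sub_ordered]
    have : ∑ i ∈ s, c * q ^ i * ∏ j ∈ s with j < i, (1 - c * q ^ j) ≤ ∑ i ∈ s, c * q ^ i := by
      apply Finset.sum_le_sum
      intro i _
      have hx : 0 ≤ c * q ^ i := mul_nonneg hc0 (pow_nonneg hq0.le i)
      have hp : ∏ j ∈ s with j < i, (1 - c * q ^ j) ≤ 1 := by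
        apply Finset.prod_le_one
        · intro j _
          have h1 : c * q ^ j ≤ c * 1 := mul_le_mul_of_nonneg_left (pow_le_one₀ hq0.le hq1.le) hc0
          nlinarith
        · intro j _
          nlinarith [mul_nonneg hc0 (pow_nonneg hq0.le j)]
      have hpn : (0:ℝ) ≤ ∏ j ∈ s with j < i, (1 - c * q ^ j) := by
        apply Finset.prod_nonneg
        intro j _
        nlinarith [mul_nonneg hc0 (pow_nonneg hq0.le j),
          mul_le_mul_of_nonneg_left (pow_le_one₀ (n := j) hq0.le hq1.le) hc0]
      nlinarith
    linarith
  have hsum : ∀ s : Finset ℕ, ∑ i ∈ s, c * q ^ i ≤ c / (1 - q) := by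
    intro s
    have := Summable.sum_le_tsum s (fun i _ => mul_nonneg hc0 (pow_nonneg hq0.le i))
      ((summable_geometric_of_lt_one hq0.le hq1).mul_left c)
    calc ∑ i ∈ s, c * q ^ i ≤ ∑' i : ℕ, c * q ^ i := this
      _ = c * (1 - q)⁻¹ := by rw [tsum_mul_left, tsum_geometric_of_lt_one hq0.le hq1]
      _ = c / (1 - q) := by rw [div_eq_mul_inv]
  have hm := multipliable_aux hq0 hq1 hc0 hc1
  have hten := hm.hasProd.tendsto_prod_nat
  have hge : (1 : ℝ) - c / (1 - q) ≤ ∏' k : ℕ, (1 - c * q ^ k) := by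
    apply ge_of_tendsto hten
    filter_upwards with m
    calc (1:ℝ) - c / (1 - q) ≤ 1 - ∑ i ∈ Finset.range m, c * q ^ i := by
          linarith [hsum (Finset.range m)]
      _ ≤ ∏ i ∈ Finset.range m, (1 - c * q ^ i) := hfin _
  linarith

lemma tprod_mono_aux {q c d : ℝ} (hq0 : 0 < q) (hq1 : q < 1) (hc0 : 0 ≤ c) (hcd : c ≤ d)
    (hd1 : d < 1) :
    ∏' k : ℕ, (1 - d * q ^ k) ≤ ∏' k : ℕ, (1 - c * q ^ k) := by
  have hd0 : 0 ≤ d := le_trans hc0 hcd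
  have hc1 : c < 1 := lt_of_le_of_lt hcd hd1
  have hfacc : ∀ k : ℕ, 0 < 1 - c * q ^ k := by
    intro k
    have h1 : c * q ^ k ≤ c * 1 := mul_le_mul_of_nonneg_left (pow_le_one₀ hq0.le hq1.le) hc0
    nlinarith
  have hfacd : ∀ k : ℕ, 0 < 1 - d * q ^ k := by
    intro k
    have h1 : d * q ^ k ≤ d * 1 := mul_le_mul_of_nonneg_left (pow_le_one₀ hq0.le hq1.le) hd0
    nlinarith
  have heqc := (Real.rexp_tsum_eq_tprod (f := fun k => 1 - c * q ^ k)
    (fun k => hfacc k) (summable_log_aux hq0 hq1 hc0 hc1))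
  have heqd := (Real.rexp_tsum_eq_tprod (f := fun k => 1 - d * q ^ k)
    (fun k => hfacd k) (summable_log_aux hq0 hq1 hd0 hd1))
  rw [← heqc, ← heqd, Real.exp_le_exp]
  apply Summable.tsum_le_tsum _ (summable_log_aux hq0 hq1 hd0 hd1) (summable_log_aux hq0 hq1 hc0 hc1)
  intro k
  apply Real.log_le_log (hfacd k)
  nlinarith [pow_nonneg hq0.le k]

/-- Infinite q-Pochhammer symbol `(x;q)_∞ = ∏_{k=0}^∞ (1 - x q^k)`. -/
noncomputable def qPochInf (q x : ℝ) : ℝ := ∏' k : ℕ, (1 - x * q ^ k)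

theorem R2_bound (q a : ℝ) (hq0 : 0 < q) (hq1 : q < 1) (ha : 0 < a) (haq : a * q < 1)
    (n : ℕ) (hn : 1 ≤ n) :
    |1 / qPochInf q (a * q ^ n) - 1| ≤ a * q ^ n / ((1 - q) * qPochInf q (a * q)) := by
  have hqn : q ^ n ≤ q := by
    calc q ^ n ≤ q ^ 1 := pow_le_pow_of_le_one hq0.le hq1.le hn
      _ = q := pow_one q
  have hc0 : 0 ≤ a * q ^ n := mul_nonneg ha.le (pow_nonneg hq0.le n)
  have hcd : a * q ^ n ≤ a * q := mul_le_mul_of_nonneg_left hqn ha.le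
  have hc1 : a * q ^ n < 1 := lt_of_le_of_lt hcd haq
  have hd0 : 0 ≤ a * q := le_trans hc0 hcd
  have hP0 : 0 < qPochInf q (a * q ^ n) := tprod_pos_aux hq0 hq1 hc0 hc1
  have hQ0 : 0 < qPochInf q (a * q) := tprod_pos_aux hq0 hq1 hd0 haq
  have hP1 : qPochInf q (a * q ^ n) ≤ 1 := tprod_le_one_aux hq0 hq1 hc0 hc1
  have hQP : qPochInf q (a * q) ≤ qPochInf q (a * q ^ n) :=
    tprod_mono_aux hq0 hq1 hc0 hcd haq
  have h1P : 1 - qPochInf q (a * q ^ n) ≤ (a * q ^ n) / (1 - q) :=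
    one_sub_tprod_aux hq0 hq1 hc0 hc1
  set P := qPochInf q (a * q ^ n)
  set Q := qPochInf q (a * q)
  have habs : |1 / P - 1| = (1 - P) / P := by
    rw [abs_of_nonneg]
    · field_simp
    · rw [sub_nonneg, le_div_iff₀ hP0, one_mul]
      exact hP1
  rw [habs, show a * q ^ n / ((1 - q) * Q) = (a * q ^ n / (1 - q)) / Q by
    rw [div_div]]
  exact div_le_div₀ (div_nonneg hc0 (by linarith)) h1P hQ0 hQP
end

section
/- For a real irrational number θ and any real β, there exist infinitely many pairs of integers (n, m) with n > 0 such that |nθ − m − β| ≤ 3/n. -/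
/-- A set of integer pairs with unbounded first coordinate is infinite. -/
lemma cheb_inf_of_unbounded (S : Set (ℤ × ℤ)) (h : ∀ k : ℤ, ∃ p ∈ S, k < p.1) :
    S.Infinite := by
  intro hfin
  obtain ⟨k, hk⟩ := (hfin.image Prod.fst).bddAbove
  obtain ⟨p, hp, hlt⟩ := h k
  exact absurd (hk ⟨p, hp, rfl⟩) (not_le.mpr hlt)

/-- The denominators of good rational approximations of an irrational are unbounded. -/
lemma cheb_den_unbounded {θ : ℝ} (hθ : Irrational θ) (N : ℕ) :
    ∃ q : ℚ, N < q.den ∧ |θ - q| < 1 / (q.den : ℝ) ^ 2 := by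
  by_contra h
  push_neg at h
  apply Real.infinite_rat_abs_sub_lt_one_div_den_sq_of_irrational hθ
  set C : ℤ := ⌈(|θ| + 1) * N⌉ with hC
  have hfin : Set.Finite {q : ℚ | q.den ≤ N ∧ |q.num| ≤ C} := by
    have hinj : Set.InjOn (fun q : ℚ => (q.num, q.den))
        {q : ℚ | q.den ≤ N ∧ |q.num| ≤ C} := by
      intro a _ b _ hab
      exact Rat.ext (congrArg Prod.fst hab) (congrArg Prod.snd hab)
    apply Set.Finite.of_finite_image ?_ hinj
    apply Set.Finite.subset (Set.finite_Icc ((-C, 0) : ℤ × ℕ) (C, N))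
    rintro p ⟨q, ⟨hq1, hq2⟩, rfl⟩
    simp only [Set.mem_Icc, Prod.mk_le_mk]
    exact ⟨⟨neg_le_of_abs_le hq2, Nat.zero_le _⟩, le_of_abs_le hq2, hq1⟩
  apply hfin.subset
  intro q hq
  have hden : q.den ≤ N := by
    by_contra hd
    exact absurd hq (not_lt.mpr (h q (lt_of_not_ge hd)))
  refine ⟨hden, ?_⟩
  have hdpos : (0 : ℝ) < (q.den : ℝ) := by positivity
  have h1 : |θ - q| < 1 := by
    refine hq.trans_le ?_
    rw [div_le_one (by positivity)]
    have : (1 : ℝ) ≤ (q.den : ℝ) := by exact_mod_cast q.pos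
    nlinarith
  have habs : |(q : ℝ)| ≤ |θ| + 1 := by
    have := abs_sub_abs_le_abs_sub (q : ℝ) θ
    rw [abs_sub_comm] at this
    linarith [this.trans h1.le]
  have hnum : |(q.num : ℝ)| ≤ (|θ| + 1) * N := by
    have h2 : ((q.num : ℝ)) = (q : ℝ) * (q.den : ℝ) := by
      rw [Rat.cast_def]; field_simp
    rw [h2, abs_mul, abs_of_pos hdpos]
    have hdN : (q.den : ℝ) ≤ (N : ℝ) := by exact_mod_cast hden
    have := abs_nonneg (q : ℝ)
    nlinarith
  have : |(q.num : ℝ)| ≤ (C : ℝ) := hnum.trans (Int.le_ceil _)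
  exact_mod_cast this

/-- Key construction: from a good rational approximation with denominator `d`, produce
an integer pair `(n, m)` with `0 < n ≤ d` and `|nθ - m - β| ≤ 3/(2d)`. -/
lemma cheb_construct (θ β : ℝ) (q : ℚ) (hq : |θ - q| < 1 / (q.den : ℝ) ^ 2) :
    ∃ n m : ℤ, 0 < n ∧ n ≤ (q.den : ℤ) ∧
      |(n : ℝ) * θ - m - β| ≤ 3 / (2 * (q.den : ℝ)) := by
  set a : ℤ := q.num
  set b : ℤ := (q.den : ℤ) with hbdef
  have hb : 0 < b := by rw [hbdef]; exact_mod_cast q.pos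
  have hcop : IsCoprime a b := by
    rw [Int.isCoprime_iff_gcd_eq_one]
    exact q.reduced
  obtain ⟨u, v, huv⟩ := hcop
  set c : ℤ := round ((q.den : ℝ) * β) with hcdef
  set n' : ℤ := c * u with hn'def
  set k : ℤ := (n' - 1) / b with hkdef
  set n : ℤ := n' - b * k with hndef
  have hnval : n = (n' - 1) % b + 1 := by
    rw [hndef, Int.emod_def]; ring
  have hn1 : 0 < n := by
    rw [hnval]
    have := Int.emod_nonneg (n' - 1) hb.ne'
    omega
  have hnb : n ≤ b := by
    rw [hnval]
    have := Int.emod_lt_of_pos (n' - 1) hb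
    omega
  set m : ℤ := -(c * v + k * a) with hmdef
  have hkey : n * a = c + b * m := by
    have h1 : n' * a = c * (u * a) := by rw [hn'def]; ring
    have h2 : u * a = 1 - v * b := by linarith [huv]
    rw [hndef, hmdef]
    calc (n' - b * k) * a = c * (u * a) - b * k * a := by rw [← h1]; ring
      _ = c * (1 - v * b) - b * k * a := by rw [h2]
      _ = c + b * (-(c * v + k * a)) := by ring
  -- now the estimate
  have hbR : (0 : ℝ) < (b : ℝ) := by exact_mod_cast hb
  have hqcast : (q : ℝ) = (a : ℝ) / (b : ℝ) := by
    rw [Rat.cast_def]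
    have : ((q.den : ℤ) : ℝ) = (q.den : ℝ) := by push_cast; ring
    rw [hbdef]; norm_cast
  have hdecomp : (n : ℝ) * θ - m - β = (n : ℝ) * (θ - q) + ((c : ℝ) - (b : ℝ) * β) / b := by
    have hkeyR : (n : ℝ) * a = (c : ℝ) + (b : ℝ) * m := by exact_mod_cast hkey
    rw [hqcast]
    field_simp
    nlinarith [hkeyR]
  have hround : |(b : ℝ) * β - (c : ℝ)| ≤ 1 / 2 := by
    have := abs_sub_round ((q.den : ℝ) * β)
    rw [hcdef]
    have hbq : (b : ℝ) = (q.den : ℝ) := by rw [hbdef]; push_cast; ring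
    rw [hbq]
    exact this
  have hnR : (0 : ℝ) < (n : ℝ) := by exact_mod_cast hn1
  have hnbR : (n : ℝ) ≤ (b : ℝ) := by exact_mod_cast hnb
  have hbq : (b : ℝ) = (q.den : ℝ) := by rw [hbdef]; push_cast; ring
  have h1 : |(n : ℝ) * (θ - q)| ≤ 1 / (b : ℝ) := by
    rw [abs_mul, abs_of_pos hnR]
    calc (n : ℝ) * |θ - q| ≤ (b : ℝ) * (1 / (b : ℝ) ^ 2) := by
          apply mul_le_mul hnbR (by rw [← hbq] at hq; exact hq.le) (abs_nonneg _) hbR.le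
      _ = 1 / (b : ℝ) := by field_simp
  have h2 : |((c : ℝ) - (b : ℝ) * β) / b| ≤ 1 / (2 * (b : ℝ)) := by
    rw [abs_div, abs_of_pos hbR, abs_sub_comm]
    rw [div_le_div_iff₀ hbR (by positivity)]
    nlinarith [hround]
  refine ⟨n, m, hn1, hnb, ?_⟩
  rw [hdecomp, ← hbq]
  calc |(n : ℝ) * (θ - q) + ((c : ℝ) - (b : ℝ) * β) / b|
      ≤ |(n : ℝ) * (θ - q)| + |((c : ℝ) - (b : ℝ) * β) / b| := abs_add_le _ _
    _ ≤ 1 / (b : ℝ) + 1 / (2 * (b : ℝ)) := add_le_add h1 h2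
    _ = 3 / (2 * (b : ℝ)) := by field_simp; ring

theorem chebyshev_inhomogeneous (θ : ℝ) (hθ : Irrational θ) (β : ℝ) :
    {p : ℤ × ℤ | 0 < p.1 ∧ |(p.1 : ℝ) * θ - p.2 - β| ≤ 3 / (p.1 : ℝ)}.Infinite := by
  set S := {p : ℤ × ℤ | 0 < p.1 ∧ |(p.1 : ℝ) * θ - p.2 - β| ≤ 3 / (p.1 : ℝ)} with hS
  by_cases hdeg : ∃ p : ℤ × ℤ, (p.1 : ℝ) * θ - p.2 = β
  · -- degenerate case: β = n₀θ - m₀; shift by good approximations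
    obtain ⟨⟨n₀, m₀⟩, hp⟩ := hdeg
    apply cheb_inf_of_unbounded
    intro k
    obtain ⟨q, hqden, hq⟩ := cheb_den_unbounded hθ (n₀.natAbs + k.natAbs + 1)
    set d : ℤ := (q.den : ℤ) with hd
    have hdn : (n₀.natAbs : ℤ) + k.natAbs + 1 ≤ d := by
      rw [hd]; exact_mod_cast Nat.le_of_lt hqden
    have hn0d : |n₀| < d := by
      rw [Int.abs_eq_natAbs]; omega
    have hkd : k < d := by
      have : |k| < d := by rw [Int.abs_eq_natAbs]; omega
      omega
    refine ⟨(n₀ + d, m₀ + q.num), ⟨?_, ?_⟩, ?_⟩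
    · simp only [hS, Set.mem_setOf_eq] at *
      omega
    · -- the estimate
      have hdR : (0 : ℝ) < (d : ℝ) := by
        have : (0 : ℤ) < d := by omega
        exact_mod_cast this
      have hqcast : (q : ℝ) = (q.num : ℝ) / (d : ℝ) := by
        rw [Rat.cast_def, hd]; norm_cast
      have hval : ((n₀ + d : ℤ) : ℝ) * θ - ((m₀ + q.num : ℤ) : ℝ) - β
          = (d : ℝ) * (θ - q) := by
        rw [← hp, hqcast]
        push_cast
        field_simp
        ring
      rw [hval, abs_mul, abs_of_pos hdR]
      have hest : (d : ℝ) * |θ - q| < 1 / (d : ℝ) := by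
        have hq' : |θ - q| < 1 / (d : ℝ) ^ 2 := by
          rw [hd]; push_cast; exact hq
        calc (d : ℝ) * |θ - q| < (d : ℝ) * (1 / (d : ℝ) ^ 2) := by
              apply mul_lt_mul_of_pos_left hq' hdR
          _ = 1 / (d : ℝ) := by field_simp
      have hn2d : ((n₀ + d : ℤ) : ℝ) ≤ 2 * (d : ℝ) := by
        have : n₀ + d ≤ 2 * d := by omega
        exact_mod_cast this
      have hnpos : (0 : ℝ) < ((n₀ + d : ℤ) : ℝ) := by
        have : (0 : ℤ) < n₀ + d := by omega
        exact_mod_cast this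
      have : 1 / (d : ℝ) ≤ 3 / ((n₀ + d : ℤ) : ℝ) := by
        rw [div_le_div_iff₀ hdR hnpos]
        nlinarith
      push_cast at hest this ⊢
      linarith
    · push_cast; omega
  · -- nondegenerate case
    intro hfin
    push_neg at hdeg
    have hpos : ∀ p ∈ S, 0 < |(p.1 : ℝ) * θ - p.2 - β| := by
      intro p _
      rcases eq_or_lt_of_le (abs_nonneg ((p.1 : ℝ) * θ - p.2 - β)) with h0 | h0
      · exact absurd (by linarith [abs_eq_zero.mp h0.symm] : (p.1 : ℝ) * θ - p.2 = β)
          (hdeg p)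
      · exact h0
    obtain ⟨δ, hδpos, hδ⟩ : ∃ δ > (0 : ℝ), ∀ p ∈ S, δ ≤ |(p.1 : ℝ) * θ - p.2 - β| := by
      rcases S.eq_empty_or_nonempty with hSe | hSne
      · exact ⟨1, one_pos, by rw [hSe]; simp⟩
      · set F := hfin.toFinset.image (fun p : ℤ × ℤ => |(p.1 : ℝ) * θ - p.2 - β|) with hF
        have hFne : F.Nonempty := by
          obtain ⟨p, hp⟩ := hSne
          exact ⟨_, Finset.mem_image_of_mem _ (hfin.mem_toFinset.mpr hp)⟩
        refine ⟨F.min' hFne, ?_, ?_⟩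
        · obtain ⟨p, hp, hpe⟩ := Finset.mem_image.mp (F.min'_mem hFne)
          rw [← hpe]
          exact hpos p (hfin.mem_toFinset.mp hp)
        · intro p hp
          exact F.min'_le _ (Finset.mem_image_of_mem _ (hfin.mem_toFinset.mpr hp))
    obtain ⟨q, hqden, hq⟩ := cheb_den_unbounded hθ ⌈3 / δ⌉₊
    obtain ⟨n, m, hn1, hnb, hest⟩ := cheb_construct θ β q hq
    have hdR : (0 : ℝ) < (q.den : ℝ) := by exact_mod_cast q.pos
    have hnR : (0 : ℝ) < (n : ℝ) := by exact_mod_cast hn1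
    have hnd : (n : ℝ) ≤ (q.den : ℝ) := by exact_mod_cast hnb
    have hmem : (n, m) ∈ S := by
      refine ⟨hn1, ?_⟩
      refine hest.trans ?_
      rw [div_le_div_iff₀ (by positivity) hnR]
      nlinarith
    have hsmall : |(n : ℝ) * θ - m - β| < δ := by
      refine lt_of_le_of_lt hest ?_
      have h3δ : 3 / δ < (q.den : ℝ) := by
        calc 3 / δ ≤ (⌈3 / δ⌉₊ : ℝ) := Nat.le_ceil _
          _ < (q.den : ℝ) := by exact_mod_cast hqden
      rw [div_lt_iff₀ (by positivity)]
      rw [div_lt_iff₀ hδpos] at h3δ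
      nlinarith
    exact absurd (hδ (n, m) hmem) (not_le.mpr hsmall)
end

section
/- For 0 < q < 1 and any nonzero complex z, the theta series Θ(z|q) := ∑_{n=−∞}^{∞} q^{n²} z^n converges absolutely and satisfies the Jacobi triple product identity Θ(z|q) = (q²;q²)_∞ (−qz;q²)_∞ (−q/z;q²)_∞. -/
open Filter Finset Topology Complex

lemma jtp_summable_norm {c r : ℂ} (hr : ‖r‖ < 1) :
    Summable fun k : ℕ => ‖c * r ^ k‖ := by
  simp only [norm_mul, norm_pow]
  exact (summable_geometric_of_lt_one (norm_nonneg _) hr).mul_left ‖c‖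

lemma jtp_summable_log {u : ℕ → ℂ} (hu : Summable fun k => ‖u k‖) :
    Summable fun k => Complex.log (1 + u k) := by
  have h0 : Tendsto (fun k => ‖u k‖) atTop (nhds 0) := hu.tendsto_atTop_zero
  have hev : ∀ᶠ k in atTop, ‖Complex.log (1 + u k)‖ ≤ 3 / 2 * ‖u k‖ := by
    filter_upwards [h0.eventually_le_const (by norm_num : (0:ℝ) < 1/2)] with k hk
    exact Complex.norm_log_one_add_half_le_self hk
  rw [← Nat.cofinite_eq_atTop] at hev
  exact Summable.of_norm ((hu.mul_left (3/2)).of_norm_bounded_eventually (by simpa using hev))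

lemma jtp_hasProd_ne {u : ℕ → ℂ} (hu : Summable fun k => ‖u k‖) (h0 : ∀ k, 1 + u k ≠ 0) :
    HasProd (fun k => 1 + u k) (Complex.exp (∑' k, Complex.log (1 + u k))) := by
  have h := (jtp_summable_log hu).hasSum.cexp
  have h2 : (cexp ∘ fun k => Complex.log (1 + u k)) = fun k => 1 + u k :=
    funext fun k => Complex.exp_log (h0 k)
  rwa [h2] at h

lemma jtp_multipliable {u : ℕ → ℂ} (hu : Summable fun k => ‖u k‖) :
    Multipliable fun k => 1 + u k := by
  by_cases h0 : ∀ k, 1 + u k ≠ 0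
  · exact ⟨_, jtp_hasProd_ne hu h0⟩
  · push_neg at h0
    obtain ⟨k₀, hk⟩ := h0
    refine ⟨0, ?_⟩
    have h : ∀ᶠ s : Finset ℕ in atTop, (0:ℂ) = ∏ k ∈ s, (1 + u k) := by
      filter_upwards [eventually_ge_atTop {k₀}] with s hs
      exact (Finset.prod_eq_zero (hs (Finset.mem_singleton_self k₀)) hk).symm
    exact Tendsto.congr' h tendsto_const_nhds

noncomputable def jtpR (p : ℝ) (m : ℕ) : ℝ := ∏ i ∈ Finset.range m, (1 - p ^ (i + 1))

noncomputable def jtpGB (p : ℝ) : ℕ → ℕ → ℝ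
  | 0, 0 => 1
  | 0, _+1 => 0
  | _+1, 0 => 1
  | m+1, k+1 => jtpGB p m (k+1) + p ^ (m - k) * jtpGB p m k

variable {p : ℝ}

lemma jtpR_succ (m : ℕ) : jtpR p (m + 1) = jtpR p m * (1 - p ^ (m + 1)) :=
  Finset.prod_range_succ _ m

lemma jtpR_pos (hp0 : 0 < p) (hp1 : p < 1) (m : ℕ) : 0 < jtpR p m := by
  refine Finset.prod_pos fun i _ => ?_
  have : p ^ (i + 1) < 1 := pow_lt_one₀ hp0.le hp1 (Nat.succ_ne_zero i)
  linarith

lemma jtpR_le_one (hp0 : 0 < p) (hp1 : p < 1) (m : ℕ) : jtpR p m ≤ 1 := by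
  refine Finset.prod_le_one (fun i _ => ?_) (fun i _ => ?_)
  · have : p ^ (i + 1) < 1 := pow_lt_one₀ hp0.le hp1 (Nat.succ_ne_zero i)
    linarith
  · have : 0 < p ^ (i + 1) := pow_pos hp0 _
    linarith

lemma jtpR_antitone (hp0 : 0 < p) (hp1 : p < 1) : Antitone (jtpR p) := by
  apply antitone_nat_of_succ_le
  intro m
  rw [jtpR_succ]
  have h1 : 0 < p ^ (m + 1) := pow_pos hp0 _
  nlinarith [jtpR_pos hp0 hp1 m]

lemma jtpGB_zero_right (m : ℕ) : jtpGB p m 0 = 1 := by cases m <;> rfl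

lemma jtpGB_eq_zero : ∀ {m k : ℕ}, m < k → jtpGB p m k = 0 := by
  intro m
  induction m with
  | zero => intro k hk; match k, hk with | k+1, _ => rfl
  | succ m ih =>
    intro k hk
    match k, hk with
    | k+1, hk =>
      show jtpGB p m (k+1) + p ^ (m - k) * jtpGB p m k = 0
      rw [ih (by omega), ih (by omega), mul_zero, add_zero]

lemma jtpGB_diag : ∀ m : ℕ, jtpGB p m m = 1 := by
  intro m
  induction m with
  | zero => rfl
  | succ m ih =>
    show jtpGB p m (m+1) + p ^ (m - m) * jtpGB p m m = 1
    rw [jtpGB_eq_zero (by omega), ih, Nat.sub_self, pow_zero, one_mul, zero_add]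

lemma jtpGB_ratio : ∀ m k : ℕ, k ≤ m →
    jtpGB p m k * (jtpR p k * jtpR p (m - k)) = jtpR p m := by
  intro m
  induction m with
  | zero => intro k hk; interval_cases k; simp [jtpGB, jtpR]
  | succ m ih =>
    intro k hk
    match k with
    | 0 => simp [jtpGB_zero_right, jtpR]
    | k+1 =>
      show (jtpGB p m (k+1) + p ^ (m - k) * jtpGB p m k) * _ = _
      rcases eq_or_lt_of_le hk with h | h
      · -- k+1 = m+1, i.e. k = m
        have hkm : k = m := by omega
        subst hkm
        rw [jtpGB_eq_zero (by omega), jtpGB_diag, Nat.sub_self, Nat.sub_self, pow_zero]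
        simp [jtpR]
      · -- k+1 ≤ m
        have hk' : k + 1 ≤ m := by omega
        have e1 : m + 1 - (k + 1) = m - k := by omega
        have e2 : m - k = m - (k+1) + 1 := by omega
        have hpow : p ^ (m - k) * p ^ (k+1) = p ^ (m+1) := by
          rw [← pow_add]; congr 1; omega
        have hA : jtpR p (k+1) = jtpR p k * (1 - p^(k+1)) := jtpR_succ k
        have hB : jtpR p (m-k) = jtpR p (m-(k+1)) * (1 - p^(m-k)) := by
          have h := jtpR_succ (p := p) (m-(k+1)); rw [← e2] at h; exact h
        have h1 := ih (k+1) hk'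
        have h2 := ih k (by omega)
        rw [e1, hB, hA, jtpR_succ m]
        rw [hA] at h1
        rw [hB] at h2
        linear_combination (1 - p^(m-k)) * h1 + p^(m-k) * (1 - p^(k+1)) * h2 - jtpR p m * hpow

variable {p : ℝ}

lemma jtp_exp_le (hp0 : 0 < p) (hp1 : p < 1) {x : ℝ} (hx0 : 0 < x) (hxp : x ≤ p) :
    Real.exp (-(x / (1 - p))) ≤ 1 - x := by
  have hp' : 0 < 1 - p := by linarith
  have hx' : 0 < 1 - x := by linarith
  have h2 : 1 ≤ (1 - x) * (x / (1 - p) + 1) := by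
    rw [div_add' _ _ _ hp'.ne', ← mul_div_assoc, le_div_iff₀ hp']
    nlinarith
  have key : 1 ≤ (1 - x) * Real.exp (x / (1 - p)) := by
    refine h2.trans ?_
    have := Real.add_one_le_exp (x / (1 - p))
    nlinarith
  rw [Real.exp_neg]
  rw [inv_le_comm₀ (Real.exp_pos _) hx', ← one_div, div_le_iff₀ hx']
  linarith [key]

lemma jtp_geom_sum (hp0 : 0 < p) (hp1 : p < 1) (m : ℕ) :
    ∑ i ∈ Finset.range m, p ^ (i + 1) ≤ p / (1 - p) := by
  have hp' : 0 < 1 - p := by linarith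
  have e : ∑ i ∈ Finset.range m, p ^ (i + 1) = p * ∑ i ∈ Finset.range m, p ^ i := by
    rw [Finset.mul_sum]
    exact Finset.sum_congr rfl fun i _ => by rw [pow_succ, mul_comm]
  rw [e, div_eq_mul_inv]
  refine mul_le_mul_of_nonneg_left ?_ hp0.le
  have hsum := summable_geometric_of_lt_one hp0.le hp1
  calc ∑ i ∈ Finset.range m, p ^ i ≤ ∑' i : ℕ, p ^ i :=
        Summable.sum_le_tsum _ (fun i _ => (pow_pos hp0 i).le) hsum
    _ = (1 - p)⁻¹ := tsum_geometric_of_lt_one hp0.le hp1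

lemma jtpR_lower (hp0 : 0 < p) (hp1 : p < 1) (m : ℕ) :
    Real.exp (-(p / (1 - p) ^ 2)) ≤ jtpR p m := by
  have hp' : 0 < 1 - p := by linarith
  have step1 : ∀ i ∈ Finset.range m, Real.exp (-(p ^ (i+1) / (1 - p))) ≤ 1 - p ^ (i+1) := by
    intro i _
    refine jtp_exp_le hp0 hp1 (pow_pos hp0 _) ?_
    calc p ^ (i+1) ≤ p ^ 1 := pow_le_pow_of_le_one hp0.le hp1.le (by omega)
      _ = p := pow_one p
  calc Real.exp (-(p / (1 - p) ^ 2))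
      ≤ Real.exp (-(∑ i ∈ Finset.range m, p ^ (i+1) / (1-p))) := by
        apply Real.exp_le_exp.mpr
        rw [neg_le_neg_iff, ← Finset.sum_div]
        calc (∑ i ∈ Finset.range m, p ^ (i+1)) / (1 - p)
            ≤ (p / (1 - p)) / (1 - p) := by
              gcongr
              exact jtp_geom_sum hp0 hp1 m
          _ = p / (1 - p) ^ 2 := by rw [div_div, sq]
    _ = ∏ i ∈ Finset.range m, Real.exp (-(p ^ (i+1) / (1-p))) := by
        rw [← Real.exp_sum, ← Finset.sum_neg_distrib]
    _ ≤ jtpR p m := Finset.prod_le_prod (fun i _ => (Real.exp_pos _).le) step1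

variable {p : ℝ}

noncomputable def jtpL (p : ℝ) : ℝ := ⨅ m, jtpR p m

lemma jtpR_bddBelow (hp0 : 0 < p) (hp1 : p < 1) : BddBelow (Set.range (jtpR p)) :=
  ⟨0, by rintro _ ⟨m, rfl⟩; exact (jtpR_pos hp0 hp1 m).le⟩

lemma jtpR_tendsto (hp0 : 0 < p) (hp1 : p < 1) : Tendsto (jtpR p) atTop (𝓝 (jtpL p)) :=
  tendsto_atTop_ciInf (jtpR_antitone hp0 hp1) (jtpR_bddBelow hp0 hp1)

lemma jtpL_le (hp0 : 0 < p) (hp1 : p < 1) (m : ℕ) : jtpL p ≤ jtpR p m :=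
  ciInf_le (jtpR_bddBelow hp0 hp1) m

lemma jtpL_pos (hp0 : 0 < p) (hp1 : p < 1) : 0 < jtpL p :=
  lt_of_lt_of_le (Real.exp_pos _) (le_ciInf (jtpR_lower hp0 hp1))

lemma jtpGB_eq_div (hp0 : 0 < p) (hp1 : p < 1) {m k : ℕ} (hk : k ≤ m) :
    jtpGB p m k = jtpR p m / (jtpR p k * jtpR p (m - k)) := by
  have h2 := jtpR_pos hp0 hp1 k
  have h3 := jtpR_pos hp0 hp1 (m - k)
  rw [eq_div_iff (by positivity)]
  exact jtpGB_ratio m k hk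

lemma jtpGB_nonneg (hp0 : 0 < p) (hp1 : p < 1) (m k : ℕ) : 0 ≤ jtpGB p m k := by
  rcases le_or_gt k m with h | h
  · rw [jtpGB_eq_div hp0 hp1 h]
    have h1 := jtpR_pos hp0 hp1 m
    have h2 := jtpR_pos hp0 hp1 k
    have h3 := jtpR_pos hp0 hp1 (m - k)
    positivity
  · rw [jtpGB_eq_zero h]

lemma jtpGB_le (hp0 : 0 < p) (hp1 : p < 1) (m k : ℕ) : jtpGB p m k ≤ (jtpL p)⁻¹ := by
  have hL := jtpL_pos hp0 hp1
  rcases le_or_gt k m with h | h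
  · rw [jtpGB_eq_div hp0 hp1 h]
    have h2 := jtpR_pos hp0 hp1 k
    have h3 := jtpR_pos hp0 hp1 (m - k)
    calc jtpR p m / (jtpR p k * jtpR p (m - k))
        ≤ jtpR p k / (jtpR p k * jtpR p (m - k)) := by
          gcongr
          exact jtpR_antitone hp0 hp1 h
      _ = (jtpR p (m - k))⁻¹ := by field_simp
      _ ≤ (jtpL p)⁻¹ := by
          gcongr
          exact jtpL_le hp0 hp1 _
  · rw [jtpGB_eq_zero h]; positivity

lemma jtpGB_tendsto (hp0 : 0 < p) (hp1 : p < 1) (n : ℤ) :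
    Tendsto (fun N : ℕ => jtpGB p (2 * N) ((n + N).toNat)) atTop (𝓝 (jtpL p)⁻¹) := by
  have hL := jtpL_pos hp0 hp1
  have htoNat : Tendsto (fun N : ℕ => (n + N).toNat) atTop atTop :=
    tendsto_atTop_atTop.mpr fun b => ⟨b + n.natAbs, fun a ha => by omega⟩
  have htoNat2 : Tendsto (fun N : ℕ => (N - n).toNat) atTop atTop :=
    tendsto_atTop_atTop.mpr fun b => ⟨b + n.natAbs, fun a ha => by omega⟩
  have h1 : Tendsto (fun N : ℕ => jtpR p (2 * N)) atTop (𝓝 (jtpL p)) :=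
    (jtpR_tendsto hp0 hp1).comp (tendsto_atTop_atTop.mpr fun b => ⟨b, fun a ha => by omega⟩)
  have h2 : Tendsto (fun N : ℕ => jtpR p ((n + N).toNat)) atTop (𝓝 (jtpL p)) :=
    (jtpR_tendsto hp0 hp1).comp htoNat
  have h3 : Tendsto (fun N : ℕ => jtpR p ((N - n).toNat)) atTop (𝓝 (jtpL p)) :=
    (jtpR_tendsto hp0 hp1).comp htoNat2
  have key : Tendsto (fun N : ℕ => jtpR p (2 * N) / (jtpR p ((n + N).toNat) * jtpR p ((N - n).toNat)))
      atTop (𝓝 (jtpL p / (jtpL p * jtpL p))) :=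
    h1.div (h2.mul h3) (by positivity)
  have heq : jtpL p / (jtpL p * jtpL p) = (jtpL p)⁻¹ := by field_simp
  rw [heq] at key
  refine key.congr' ?_
  filter_upwards [eventually_ge_atTop n.natAbs] with N hN
  have hle : (n + N).toNat ≤ 2 * N := by omega
  have hsub : 2 * N - (n + N).toNat = (N - n).toNat := by omega
  rw [jtpGB_eq_div hp0 hp1 hle, hsub]

variable {p : ℝ}

lemma jtp_gauss (p : ℝ) (t : ℂ) (m : ℕ) :
    ∏ j ∈ Finset.range m, (1 + t * (p:ℂ)^j)
      = ∑ k ∈ Finset.range (m+1), (jtpGB p m k : ℂ) * (p:ℂ)^(k.choose 2) * t^k := by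
  induction m with
  | zero => simp [jtpGB]
  | succ m ih =>
    have hrec : ∀ k : ℕ, (jtpGB p (m+1) (k+1) : ℂ)
        = (jtpGB p m (k+1) : ℂ) + (p:ℂ)^(m-k) * (jtpGB p m k : ℂ) := by
      intro k
      have : jtpGB p (m+1) (k+1) = jtpGB p m (k+1) + p ^ (m - k) * jtpGB p m k := rfl
      rw [this]; push_cast; ring
    have hchoose : ∀ k : ℕ, (k+1).choose 2 = k.choose 2 + k := by
      intro k
      rw [Nat.choose_succ_succ, Nat.choose_one_right, Nat.add_comm]
    rw [Finset.prod_range_succ, ih, Finset.sum_range_succ' _ (m+1)]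
    have hsplit : ∀ k ∈ Finset.range (m+1),
        (jtpGB p (m+1) (k+1) : ℂ) * (p:ℂ)^((k+1).choose 2) * t^(k+1)
        = (jtpGB p m (k+1) : ℂ) * (p:ℂ)^((k+1).choose 2) * t^(k+1)
          + (t * (p:ℂ)^m) * ((jtpGB p m k : ℂ) * (p:ℂ)^(k.choose 2) * t^k) := by
      intro k hk
      rw [Finset.mem_range] at hk
      rw [hrec k, hchoose k]
      have hexp : (p:ℂ)^(m-k) * (p:ℂ)^(k.choose 2 + k) = (p:ℂ)^(k.choose 2 + m) := by
        rw [← pow_add]; congr 1; omega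
      calc ((jtpGB p m (k+1) : ℂ) + (p:ℂ)^(m-k) * (jtpGB p m k : ℂ))
            * (p:ℂ)^(k.choose 2 + k) * t^(k+1)
          = (jtpGB p m (k+1) : ℂ) * (p:ℂ)^(k.choose 2 + k) * t^(k+1)
            + (jtpGB p m k : ℂ) * ((p:ℂ)^(m-k) * (p:ℂ)^(k.choose 2 + k)) * t^(k+1) := by ring
        _ = _ := by rw [hexp, pow_add, pow_succ]; ring
    rw [Finset.sum_congr rfl hsplit, Finset.sum_add_distrib, ← Finset.mul_sum]
    have h2 := Finset.sum_range_succ' (fun k => (jtpGB p m k : ℂ) * (p:ℂ)^(k.choose 2) * t^k) (m+1)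
    have h3 := Finset.sum_range_succ (fun k => (jtpGB p m k : ℂ) * (p:ℂ)^(k.choose 2) * t^k) (m+1)
    simp only [jtpGB_eq_zero (show m < m+1 by omega), Complex.ofReal_zero, zero_mul] at h3
    rw [h3] at h2
    simp only [jtpGB_zero_right, Complex.ofReal_one] at h2 ⊢
    linear_combination h2

lemma jtp_two_choose (k : ℕ) : 2 * k.choose 2 = k * (k - 1) := by
  induction k with
  | zero => rfl
  | succ k ih =>
    rw [Nat.choose_succ_succ, Nat.choose_one_right, Nat.mul_add, ih]
    cases k <;> simp <;> ring_nf <;> omega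

lemma jtp_exp1 (N k : ℕ) (h : N ≤ k) : N^2 + 2*k.choose 2 + k = (k-N)^2 + 2*N*k := by
  have h2c := jtp_two_choose k
  rcases Nat.eq_zero_or_pos k with rfl | hk
  · interval_cases N; simp
  · zify [h, hk] at h2c ⊢
    linear_combination h2c

lemma jtp_exp2 (N k : ℕ) (h : k ≤ N) : N^2 + 2*k.choose 2 + k = (N-k)^2 + 2*N*k := by
  have h2c := jtp_two_choose k
  rcases Nat.eq_zero_or_pos k with rfl | hk
  · simp
  · zify [h, hk] at h2c ⊢
    linear_combination h2c

-- per-term transformation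
lemma jtp_term {Q z : ℂ} (hQ : Q ≠ 0) (hz : z ≠ 0) (N k : ℕ) (g : ℂ) :
    Q^(N^2) * (z^N)⁻¹ * (g * (Q^2)^(k.choose 2) * (Q*z*((Q^2)^N)⁻¹)^k)
      = g * Q^(((k:ℤ)-N)^2) * z^((k:ℤ)-N) := by
  rcases le_or_gt (N:ℤ) k with h | h
  · have hN : N ≤ k := by exact_mod_cast h
    have hzp1 : (Q:ℂ)^(((k:ℤ)-N)^2) = Q^((k-N)^2 : ℕ) := by
      rw [← zpow_natCast]
      congr 1
      push_cast [hN]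
      ring
    have hzp2 : (z:ℂ)^(((k:ℤ))-N) = z^((k-N : ℕ)) := by
      rw [← zpow_natCast]
      congr 1
      omega
    rw [hzp1, hzp2]
    have hze : z^k = z^(k-N) * z^N := by rw [← pow_add]; congr 1; omega
    have hQe : Q^(N^2) * Q^(2 * k.choose 2) * Q^k = Q^((k-N)^2) * Q^(2*N*k) := by
      rw [← pow_add, ← pow_add, ← pow_add]
      congr 1
      exact jtp_exp1 N k hN
    rw [← pow_mul, ← pow_mul Q 2 N, mul_pow, mul_pow, inv_pow, ← pow_mul, hze]
    have hB : Q^(2*N*k) ≠ 0 := pow_ne_zero _ hQ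
    have hzN : z^N ≠ 0 := pow_ne_zero _ hz
    field_simp
    linear_combination g * hQe
  · have hN : k ≤ N := by omega
    have hzp1 : (Q:ℂ)^(((k:ℤ)-N)^2) = Q^((N-k)^2 : ℕ) := by
      rw [← zpow_natCast]
      congr 1
      push_cast [hN]
      ring
    have hzp2 : (z:ℂ)^(((k:ℤ))-N) = (z^((N-k : ℕ)))⁻¹ := by
      rw [show ((k:ℤ)-N) = -((N-k : ℕ):ℤ) by omega, zpow_neg, zpow_natCast]
    rw [hzp1, hzp2]
    have hze : z^k * z^(N-k) = z^N := by rw [← pow_add]; congr 1; omega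
    have hQe : Q^(N^2) * Q^(2 * k.choose 2) * Q^k = Q^((N-k)^2) * Q^(2*N*k) := by
      rw [← pow_add, ← pow_add, ← pow_add]
      congr 1
      exact jtp_exp2 N k hN
    rw [← pow_mul, ← pow_mul Q 2 N, mul_pow, mul_pow, inv_pow, ← pow_mul, ← hze]
    have hB : Q^(2*N*k) ≠ 0 := pow_ne_zero _ hQ
    have hzk : z^k ≠ 0 := pow_ne_zero _ hz
    have hzNk : z^(N-k) ≠ 0 := pow_ne_zero _ hz
    field_simp
    linear_combination g * hQe

lemma jtp_prod_split {Q z : ℂ} (hQ : Q ≠ 0) (hz : z ≠ 0) (N : ℕ) :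
    ∏ j ∈ Finset.range (2*N), (1 + (Q*z*((Q^2)^N)⁻¹) * (Q^2)^j)
      = z^N * (Q^(N^2))⁻¹
        * ∏ k ∈ Finset.range N, ((1 + Q*(Q^2)^k*z) * (1 + Q*(Q^2)^k*z⁻¹)) := by
  have hQ2 : (Q:ℂ)^2 ≠ 0 := pow_ne_zero _ hQ
  have hQ2N : ((Q:ℂ)^2)^N ≠ 0 := pow_ne_zero _ hQ2
  rw [show 2*N = N+N by ring, Finset.prod_range_add]
  have hsecond : ∀ j ∈ Finset.range N,
      (1 + (Q*z*((Q^2)^N)⁻¹) * (Q^2)^(N+j)) = 1 + Q*(Q^2)^j*z := by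
    intro j _
    rw [pow_add]
    field_simp
  have hfirst : ∀ j ∈ Finset.range N,
      (1 + (Q*z*((Q^2)^N)⁻¹) * (Q^2)^j)
        = (Q*z*((Q^2)^N)⁻¹ * (Q^2)^j) * (1 + Q*(Q^2)^(N-1-j)*z⁻¹) := by
    intro j hj
    rw [Finset.mem_range] at hj
    have hsplit : (Q^2)^N = (Q^2)^j * (Q^2)^(N-1-j) * Q^2 := by
      rw [← pow_add, ← pow_succ]
      congr 1
      omega
    have hab : (Q*z*((Q^2)^N)⁻¹ * (Q^2)^j) * (Q*(Q^2)^(N-1-j)*z⁻¹) = 1 := by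
      have e : (Q*z*((Q^2)^N)⁻¹ * (Q^2)^j) * (Q*(Q^2)^(N-1-j)*z⁻¹)
          = ((Q^2)^j * (Q^2)^(N-1-j) * Q^2) * ((Q^2)^N)⁻¹ * (z * z⁻¹) := by ring
      rw [e, ← hsplit, mul_inv_cancel₀ hQ2N, mul_inv_cancel₀ hz, one_mul]
    rw [mul_add, mul_one, hab]
    ring
  rw [Finset.prod_congr rfl hsecond, Finset.prod_congr rfl hfirst,
    Finset.prod_mul_distrib, Finset.prod_range_reflect (fun k => 1 + Q*(Q^2)^k*z⁻¹) N]
  have hmult : ∏ j ∈ Finset.range N, (Q*z*((Q^2)^N)⁻¹ * (Q^2)^j)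
      = z^N * (Q^(N^2))⁻¹ := by
    rw [Finset.prod_mul_distrib, Finset.prod_pow_eq_pow_sum, Finset.prod_const]
    have he : (∑ i ∈ Finset.range N, i) * 2 = N * (N - 1) := Finset.sum_range_id_mul_two N
    have hexp : N + (∑ i ∈ Finset.range N, i) * 2 + N^2 = 2*N^2 := by
      rcases Nat.eq_zero_or_pos N with rfl | hN
      · simp
      · zify [hN] at he ⊢
        linear_combination he
    have hQp : Q^(N + (∑ i ∈ Finset.range N, i) * 2 + N^2) = Q^(2*N^2) := by
      rw [hexp]
    have hQN : (Q:ℂ)^(N^2) ≠ 0 := pow_ne_zero _ hQ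
    rw [Finset.card_range, mul_pow, mul_pow, inv_pow, ← pow_mul, ← pow_mul, ← pow_mul,
      eq_mul_inv_iff_mul_eq₀ hQN]
    have hinv : Q^(2*N*N) * (Q^(2*N*N))⁻¹ = 1 := mul_inv_cancel₀ (pow_ne_zero _ hQ)
    rw [pow_add, pow_add, sq N, ← mul_assoc] at hQp
    linear_combination z^N * (Q^(2*N*N))⁻¹ * hQp + z^N * hinv
  rw [hmult, Finset.prod_mul_distrib]
  ring

lemma jtp_key (q : ℝ) (hq0 : 0 < q) {z : ℂ} (hz : z ≠ 0) (N : ℕ) :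
    ∏ k ∈ Finset.range N, ((1 + (q:ℂ)*((q:ℂ)^2)^k*z) * (1 + (q:ℂ)*((q:ℂ)^2)^k*z⁻¹))
      = ∑ k ∈ Finset.range (2*N+1),
          (jtpGB (q^2) (2*N) k : ℂ) * (q:ℂ)^(((k:ℤ)-N)^2) * z^((k:ℤ)-N) := by
  have hQ : (q:ℂ) ≠ 0 := by exact_mod_cast hq0.ne'
  have hcast : ((q^2 : ℝ) : ℂ) = (q:ℂ)^2 := by push_cast; ring
  have gauss := jtp_gauss (q^2) ((q:ℂ)*z*(((q:ℂ)^2)^N)⁻¹) (2*N)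
  rw [hcast, jtp_prod_split hQ hz N] at gauss
  have hzN : (z:ℂ)^N ≠ 0 := pow_ne_zero _ hz
  have hQN : (q:ℂ)^(N^2) ≠ 0 := pow_ne_zero _ hQ
  have h1 : ∏ k ∈ Finset.range N, ((1 + (q:ℂ)*((q:ℂ)^2)^k*z) * (1 + (q:ℂ)*((q:ℂ)^2)^k*z⁻¹))
      = (q:ℂ)^(N^2) * (z^N)⁻¹
        * ∑ k ∈ Finset.range (2*N+1), (jtpGB (q^2) (2*N) k : ℂ)
            * ((q:ℂ)^2)^(k.choose 2) * ((q:ℂ)*z*(((q:ℂ)^2)^N)⁻¹)^k := by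
    rw [← gauss]
    field_simp
    ring
  rw [h1, Finset.mul_sum]
  exact Finset.sum_congr rfl fun k _ => jtp_term hQ hz N k _

lemma jtp_nat_summable {q r : ℝ} (hq0 : 0 < q) (hq1 : q < 1) (hr : 0 ≤ r) :
    Summable (fun n : ℕ => q ^ (n^2) * r ^ n) := by
  have htend : Tendsto (fun n : ℕ => q ^ n * r) atTop (𝓝 0) := by
    simpa using (tendsto_pow_atTop_nhds_zero_of_lt_one hq0.le hq1).mul_const r
  have hev : ∀ᶠ n : ℕ in atTop, ‖q ^ (n^2) * r ^ n‖ ≤ (2⁻¹ : ℝ) ^ n := by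
    have h2 := htend.eventually_le_const (show (0:ℝ) < 2⁻¹ by norm_num)
    filter_upwards [h2] with n hn
    have h1 : q ^ (n^2) * r ^ n = (q ^ n * r) ^ n := by
      rw [mul_pow, ← pow_mul, sq]
    rw [h1, Real.norm_eq_abs, _root_.abs_of_nonneg (by positivity)]
    exact pow_le_pow_left₀ (by positivity) hn n
  rw [← Nat.cofinite_eq_atTop] at hev
  exact Summable.of_norm
    ((summable_geometric_of_lt_one (r := (2⁻¹:ℝ)) (by norm_num)
      (by norm_num)).of_norm_bounded_eventually (by simpa only [norm_norm] using hev))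

lemma jtp_abs_eq {q : ℝ} (hq0 : 0 < q) {z : ℂ} (hz : z ≠ 0) (n : ℤ) :
    ‖(q:ℂ) ^ (n^2) * z ^ n‖ = q ^ (n^2) * ‖z‖ ^ n := by
  rw [norm_mul, norm_zpow, norm_zpow, Complex.norm_real, Real.norm_eq_abs, _root_.abs_of_pos hq0]

lemma jtp_int_summable {q : ℝ} (hq0 : 0 < q) (hq1 : q < 1) {z : ℂ} (hz : z ≠ 0) :
    Summable (fun n : ℤ => ‖(q:ℂ) ^ (n^2) * z ^ n‖) := by
  set r : ℝ := max ‖z‖ ‖z‖⁻¹ with hr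
  have hz0 : 0 < ‖z‖ := norm_pos_iff.mpr hz
  have hr0 : 0 ≤ r := le_max_of_le_left hz0.le
  have hb := jtp_nat_summable hq0 hq1 hr0
  apply Summable.of_nat_of_neg_add_one
  · apply Summable.of_nonneg_of_le (fun n => norm_nonneg _) _ hb
    intro n
    rw [jtp_abs_eq hq0 hz]
    have e1 : ((n:ℤ)^2 : ℤ) = ((n^2 : ℕ) : ℤ) := by push_cast; ring
    rw [e1, zpow_natCast, zpow_natCast]
    have : q ^ (n^2) * ‖z‖ ^ n ≤ q ^ (n^2) * r ^ n := by
      gcongr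
      exact le_max_left _ _
    simpa using this
  · apply Summable.of_nonneg_of_le (fun n => norm_nonneg _) _
      ((summable_nat_add_iff 1).mpr hb)
    intro n
    rw [jtp_abs_eq hq0 hz]
    rw [show ((-((n:ℤ)+1))^2 : ℤ) = (((n+1)^2 : ℕ) : ℤ) by push_cast; ring, zpow_natCast]
    rw [show (-((n:ℤ)+1)) = -(((n+1) : ℕ) : ℤ) by push_cast; ring, zpow_neg, zpow_natCast,
      ← inv_pow]
    gcongr
    exact le_max_right _ _

theorem jacobi_triple_product (q : ℝ) (hq0 : 0 < q) (hq1 : q < 1) (z : ℂ) (hz : z ≠ 0) :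
    Summable (fun n : ℤ => ‖(q : ℂ) ^ (n ^ 2) * z ^ n‖) ∧
      (∑' n : ℤ, (q : ℂ) ^ (n ^ 2) * z ^ n) =
        (∏' k : ℕ, (1 - ((q : ℂ) ^ 2) * ((q : ℂ) ^ 2) ^ k)) *
          (∏' k : ℕ, (1 + (q : ℂ) * z * ((q : ℂ) ^ 2) ^ k)) *
          (∏' k : ℕ, (1 + (q : ℂ) / z * ((q : ℂ) ^ 2) ^ k)) := by
  have hsum := jtp_int_summable hq0 hq1 hz
  refine ⟨hsum, ?_⟩
  have hp0 : 0 < q^2 := by positivity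
  have hp1 : q^2 < 1 := by nlinarith
  have hL := jtpL_pos hp0 hp1
  have hQ : (q:ℂ) ≠ 0 := by exact_mod_cast hq0.ne'
  have hPnorm : ‖((q:ℂ)^2)‖ < 1 := by
    rw [norm_pow, Complex.norm_real, Real.norm_eq_abs, _root_.abs_of_pos hq0]
    exact hp1
  have m1 : Multipliable (fun k : ℕ => 1 + (-(q:ℂ)^2) * ((q:ℂ)^2)^k) :=
    jtp_multipliable (jtp_summable_norm hPnorm)
  have m2 : Multipliable (fun k : ℕ => 1 + ((q:ℂ)*z) * ((q:ℂ)^2)^k) :=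
    jtp_multipliable (jtp_summable_norm hPnorm)
  have m3 : Multipliable (fun k : ℕ => 1 + ((q:ℂ)/z) * ((q:ℂ)^2)^k) :=
    jtp_multipliable (jtp_summable_norm hPnorm)
  -- the first product equals the cast of jtpL (q^2)
  have hpart1 : ∀ N : ℕ, ∏ k ∈ Finset.range N, (1 + (-(q:ℂ)^2) * ((q:ℂ)^2)^k)
      = ((jtpR (q^2) N : ℝ) : ℂ) := by
    intro N
    rw [jtpR]
    push_cast
    exact (Finset.prod_congr rfl fun k _ => by rw [pow_succ]; ring).symm
  have hA1 : Tendsto (fun N : ℕ => ∏ k ∈ Finset.range N, (1 + (-(q:ℂ)^2) * ((q:ℂ)^2)^k))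
      atTop (𝓝 (∏' k : ℕ, (1 + (-(q:ℂ)^2) * ((q:ℂ)^2)^k))) :=
    m1.hasProd.tendsto_prod_nat
  have hA2 : Tendsto (fun N : ℕ => ∏ k ∈ Finset.range N, (1 + (-(q:ℂ)^2) * ((q:ℂ)^2)^k))
      atTop (𝓝 ((jtpL (q^2) : ℝ) : ℂ)) := by
    have := (Complex.continuous_ofReal.tendsto _).comp (jtpR_tendsto hp0 hp1)
    exact this.congr fun N => (hpart1 N).symm
  have hAeq : (∏' k : ℕ, (1 + (-(q:ℂ)^2) * ((q:ℂ)^2)^k)) = ((jtpL (q^2) : ℝ) : ℂ) :=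
    tendsto_nhds_unique hA1 hA2
  -- tendsto of the two-variable products
  have hprod : Tendsto (fun N : ℕ => ∏ k ∈ Finset.range N,
        ((1 + (q:ℂ)*((q:ℂ)^2)^k*z) * (1 + (q:ℂ)*((q:ℂ)^2)^k*z⁻¹))) atTop
      (𝓝 ((∏' k : ℕ, (1 + ((q:ℂ)*z) * ((q:ℂ)^2)^k)) * (∏' k : ℕ, (1 + ((q:ℂ)/z) * ((q:ℂ)^2)^k)))) := by
    refine (m2.hasProd.tendsto_prod_nat.mul m3.hasProd.tendsto_prod_nat).congr fun N => ?_
    rw [← Finset.prod_mul_distrib]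
    exact Finset.prod_congr rfl fun k _ => by rw [div_eq_mul_inv]; ring
  -- the coefficient functions
  set g : ℕ → ℤ → ℂ := fun N n =>
    if n.natAbs ≤ N then ((jtpGB (q^2) (2*N) ((n+N).toNat) : ℝ):ℂ) * ((q:ℂ)^(n^2) * z^n) else 0
    with hg
  have hTeq : ∀ N : ℕ, (∏ k ∈ Finset.range N,
        ((1 + (q:ℂ)*((q:ℂ)^2)^k*z) * (1 + (q:ℂ)*((q:ℂ)^2)^k*z⁻¹))) = ∑' n : ℤ, g N n := by
    intro N
    rw [jtp_key q hq0 hz N]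
    have hsupp : ∀ n ∉ Finset.Icc (-(N:ℤ)) N, g N n = 0 := by
      intro n hn
      rw [Finset.mem_Icc] at hn
      exact if_neg (by omega)
    rw [tsum_eq_sum hsupp]
    refine Finset.sum_nbij' (fun k => (k:ℤ) - N) (fun n => (n + N).toNat) ?_ ?_ ?_ ?_ ?_
    · intro k hk
      simp only [Finset.mem_range] at hk
      simp only [Finset.mem_Icc]
      omega
    · intro n hn
      simp only [Finset.mem_Icc] at hn
      simp only [Finset.mem_range]
      omega
    · intro k hk
      simp only [Finset.mem_range] at hk
      omega
    · intro n hn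
      simp only [Finset.mem_Icc] at hn
      omega
    · intro k hk
      rw [Finset.mem_range] at hk
      rw [hg]
      simp only []
      rw [if_pos (by omega)]
      rw [show ((k:ℤ) - N + N).toNat = k by omega]
      ring
  -- Tannery / dominated convergence
  have hTan : Tendsto (fun N : ℕ => ∑' n : ℤ, g N n) atTop
      (𝓝 (∑' n : ℤ, (((jtpL (q^2))⁻¹ : ℝ):ℂ) * ((q:ℂ)^(n^2) * z^n))) := by
    apply tendsto_tsum_of_dominated_convergence
      (bound := fun n : ℤ => (jtpL (q^2))⁻¹ * ‖(q:ℂ)^(n^2) * z^n‖)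
    · exact hsum.mul_left _
    · intro n
      have h1 : Tendsto (fun N : ℕ => ((jtpGB (q^2) (2*N) ((n+N).toNat) : ℝ):ℂ)) atTop
          (𝓝 (((jtpL (q^2))⁻¹ : ℝ):ℂ)) :=
        (Complex.continuous_ofReal.tendsto _).comp (jtpGB_tendsto hp0 hp1 n)
      refine (h1.mul_const ((q:ℂ)^(n^2) * z^n)).congr' ?_
      filter_upwards [eventually_ge_atTop n.natAbs] with N hN
      rw [hg]
      simp only []
      rw [if_pos hN]
    · refine Eventually.of_forall fun N => fun n => ?_
      rw [hg]
      simp only []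
      by_cases hn : n.natAbs ≤ N
      · rw [if_pos hn, norm_mul, Complex.norm_real, Real.norm_eq_abs,
          _root_.abs_of_nonneg (jtpGB_nonneg hp0 hp1 _ _)]
        exact mul_le_mul_of_nonneg_right (jtpGB_le hp0 hp1 _ _) (norm_nonneg _)
      · rw [if_neg hn, norm_zero]
        positivity
  -- combine the two limits
  have key : (∏' k : ℕ, (1 + ((q:ℂ)*z) * ((q:ℂ)^2)^k)) * (∏' k : ℕ, (1 + ((q:ℂ)/z) * ((q:ℂ)^2)^k))
      = (((jtpL (q^2))⁻¹ : ℝ):ℂ) * ∑' n : ℤ, (q:ℂ)^(n^2) * z^n := by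
    have := tendsto_nhds_unique (hprod.congr hTeq) hTan
    rw [this, tsum_mul_left]
  have hLne : ((jtpL (q^2) : ℝ) : ℂ) ≠ 0 := by
    simpa using hL.ne'
  have hT1 : (∏' k : ℕ, (1 - ((q : ℂ) ^ 2) * ((q : ℂ) ^ 2) ^ k)) = ((jtpL (q^2) : ℝ) : ℂ) := by
    rw [← hAeq]
    exact tprod_congr fun k => by ring
  rw [hT1, mul_assoc, key]
  push_cast
  rw [← mul_assoc, mul_inv_cancel₀ hLne, one_mul]
end
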